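/- Let X̃ = S(1,…,1) ⊆ P^{2n−1} be the smooth rational normal scroll of type (1,…,1) (n ones) with n ≥ 2, and let p ∈ P^{2n−1} \ X̃ be a closed point. Then Σ_p(X̃) is a smooth quadric surface. -/

import Mathlib

/-!
Common framework: projective space over an algebraically closed field, linear
subspaces, Zariski closure, tangent spaces, secant cones and secant loci,
rational normal scrolls (possibly cones) and their distinguished subvarieties.
-/

open Projectivization MvPolynomial

noncomputable section

namespace SecantLoci

/-- Projective `N`-space over `K`, with homogeneous coordinates indexed by `Fin (N+1)`. -/
abbrev PS (K : Type*) [Field K] (N : ℕ) := Projectivization K (Fin (N + 1) → K)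

variable {K : Type*} [Field K] {N : ℕ}

/-- The affine cone over a set of projective points (it contains `0`). -/
def cone (S : Set (PS K N)) : Set (Fin (N + 1) → K) :=
  { v | ∀ hv : v ≠ 0, Projectivization.mk K v hv ∈ S }

/-- The set of projective points lying in the projectivization of a linear subspace `W`. -/
def linSet (W : Submodule K (Fin (N + 1) → K)) : Set (PS K N) :=
  { x | x.submodule ≤ W }

/-- `S` is a projective linear subspace of (projective) dimension `d`. -/
def IsLinearOfDim (S : Set (PS K N)) (d : ℕ) : Prop :=
  ∃ W : Submodule K (Fin (N + 1) → K), Module.finrank K W = d + 1 ∧ S = linSet W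

/-- The projective linear span of a set of projective points. -/
def projSpan (S : Set (PS K N)) : Set (PS K N) :=
  linSet (⨆ x ∈ S, x.submodule)

/-- The line through two points (the span of the pair). -/
def lineThrough (p q : PS K N) : Set (PS K N) := projSpan {p, q}

def IsLine (S : Set (PS K N)) : Prop := IsLinearOfDim S 1

def IsPlane (S : Set (PS K N)) : Prop := IsLinearOfDim S 2

/-- The polynomials vanishing on the affine cone over `S`. -/
def vanishing (S : Set (PS K N)) : Set (MvPolynomial (Fin (N + 1)) K) :=
  { f | ∀ v ∈ cone S, eval v f = 0 }

/-- The Zariski closure of a set of projective points. -/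
def zcl (S : Set (PS K N)) : Set (PS K N) :=
  { x | ∀ f ∈ vanishing S, eval x.rep f = 0 }

def IsZClosed (S : Set (PS K N)) : Prop := zcl S = S

/-- Irreducibility with respect to Zariski closed sets. -/
def IsIrred (S : Set (PS K N)) : Prop :=
  S.Nonempty ∧ ∀ A B : Set (PS K N),
    IsZClosed A → IsZClosed B → S ⊆ A ∪ B → S ⊆ A ∨ S ⊆ B

/-- `dimGE S k` : the (Zariski) dimension of `S` is at least `k`, i.e. there is a
strictly increasing chain of `k+1` nonempty irreducible closed subsets of the closure of `S`. -/
def dimGE (S : Set (PS K N)) (k : ℕ) : Prop :=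
  ∃ c : Fin (k + 1) → Set (PS K N), StrictMono c ∧
    (∀ i, IsZClosed (c i) ∧ IsIrred (c i)) ∧ c (Fin.last k) ⊆ zcl S

/-- The embedded join of two sets: the Zariski closure of the union of all lines
joining a point of `Y` to a point of `Z` (together with `Y` and `Z` themselves). -/
def join (Y Z : Set (PS K N)) : Set (PS K N) :=
  zcl (Y ∪ Z ∪ ⋃ y ∈ Y, ⋃ z ∈ Z, lineThrough y z)

/-- The (projective) Zariski tangent space of `X` at `q`: the projectivization of the
kernel of the linear parts at `q` of all polynomials vanishing on the cone over `X`. -/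
def tangentSpace (X : Set (PS K N)) (q : PS K N) : Set (PS K N) :=
  { x | ∀ f ∈ vanishing X, ∑ i, x.rep i * eval q.rep (pderiv i f) = 0 }

/-- A line `L` is a secant line of `X` when it meets `X` in a scheme of length at least 2:
equivalently, it meets `X` in two distinct points, or it is tangent to `X` at some point. -/
def IsSecantLine (X L : Set (PS K N)) : Prop :=
  IsLine L ∧
    ((∃ x ∈ X ∩ L, ∃ y ∈ X ∩ L, x ≠ y) ∨ ∃ q ∈ X ∩ L, L ⊆ tangentSpace X q)

/-- The secant cone `Sec_p(X)`: the union of all secant lines of `X` through `p`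
(just `{p}` if there is no such line). -/
def secCone (X : Set (PS K N)) (p : PS K N) : Set (PS K N) :=
  {p} ∪ ⋃ L ∈ { L | IsSecantLine X L ∧ p ∈ L }, L

/-- The secant locus `Σ_p(X)` (as a set: the support of the scheme-theoretic
intersection of `X` with the secant cone). -/
def secLocus (X : Set (PS K N)) (p : PS K N) : Set (PS K N) :=
  X ∩ secCone X p

/-- The secant variety: the Zariski closure of the union of all chords of `X`. -/
def secVariety (X : Set (PS K N)) : Set (PS K N) :=
  zcl (⋃ x ∈ X, ⋃ y ∈ X, ⋃ _ : x ≠ y, lineThrough x y)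

/-- The tangent variety: the Zariski closure of the union of all tangent spaces of `X`. -/
def tanVariety (X : Set (PS K N)) : Set (PS K N) :=
  zcl (⋃ q ∈ X, tangentSpace X q)

/-- `S` is a smooth plane conic: the image of `ℙ¹` under a degree-2 Veronese map into
the plane spanned by three linearly independent vectors. -/
def IsSmoothConic (S : Set (PS K N)) : Prop :=
  ∃ v : Fin 3 → (Fin (N + 1) → K), LinearIndependent K v ∧
    S = { x | ∃ s t : K, (s, t) ≠ (0, 0) ∧
      x.submodule = Submodule.span K {s ^ 2 • v 0 + (s * t) • v 1 + t ^ 2 • v 2} }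

/-- `S` is a smooth quadric surface (in the 3-space spanned by four independent vectors):
the image of `ℙ¹ × ℙ¹` under a Segre map. -/
def IsSmoothQuadricSurface (S : Set (PS K N)) : Prop :=
  ∃ v : Fin 2 → Fin 2 → (Fin (N + 1) → K),
    LinearIndependent K (fun q : Fin 2 × Fin 2 => v q.1 q.2) ∧
    S = { x | ∃ b c : Fin 2 → K, b ≠ 0 ∧ c ≠ 0 ∧
      x.submodule = Submodule.span K {∑ i, ∑ j, (b i * c j) • v i j} }

/-- The data of a smooth rational normal scroll of type `(a 0, …, a (n-1))` in `ℙ^N`: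
a family of linearly independent vectors `v i j`, `0 ≤ j ≤ a i`, giving the rational
normal curve directrices of the scroll. -/
structure ScrollData (K : Type*) [Field K] (N n : ℕ) (a : Fin n → ℕ) where
  v : (i : Fin n) → Fin (a i + 1) → (Fin (N + 1) → K)
  indep : LinearIndependent K fun q : (i : Fin n) × Fin (a i + 1) => v q.1 q.2

namespace ScrollData

variable {n : ℕ} {a : Fin n → ℕ}

/-- The point of the `i`-th directrix curve over the parameter `(s : t) ∈ ℙ¹`. -/
def w (D : ScrollData K N n a) (i : Fin n) (s t : K) : Fin (N + 1) → K :=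
  ∑ j : Fin (a i + 1), (s ^ (a i - (j : ℕ)) * t ^ (j : ℕ)) • D.v i j

/-- The ruling of the scroll over the parameter `(s : t) ∈ ℙ¹`:
the linear span of the points of the directrix curves over `(s : t)`. -/
def ruling (D : ScrollData K N n a) (s t : K) : Set (PS K N) :=
  linSet (Submodule.span K (Set.range fun i => D.w i s t))

/-- The scroll itself: the union of its rulings. -/
def carrier (D : ScrollData K N n a) : Set (PS K N) :=
  ⋃ (s : K) (t : K) (_ : (s, t) ≠ (0, 0)), D.ruling s t

/-- A line section of the scroll: a line contained in the scroll meeting each ruling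
in exactly one point (a section of the scroll map `φ`). -/
def IsLineSection (D : ScrollData K N n a) (L : Set (PS K N)) : Prop :=
  IsLine L ∧ L ⊆ D.carrier ∧
    ∀ s t : K, (s, t) ≠ (0, 0) → ∃! x, x ∈ L ∩ D.ruling s t

/-- The subscroll `S(1̲)` swept out by the line sections, i.e. the subscroll
corresponding to the indices with `a i = 1`. -/
def sub1 (D : ScrollData K N n a) : Set (PS K N) :=
  ⋃ (s : K) (t : K) (_ : (s, t) ≠ (0, 0)),
    linSet (Submodule.span K
      (Set.range fun i : { i : Fin n // a i = 1 } => D.w i.1 s t))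

/-- The subscroll `S(2̲)` corresponding to the indices with `a i = 2`. -/
def sub2 (D : ScrollData K N n a) : Set (PS K N) :=
  ⋃ (s : K) (t : K) (_ : (s, t) ≠ (0, 0)),
    linSet (Submodule.span K
      (Set.range fun i : { i : Fin n // a i = 2 } => D.w i.1 s t))

/-- The Segre variety `Δ = ⋃_β ⟨C_β⟩ ≅ ℙ² × ℙ^{m-k-1}`: the union of the planes of
the conic sections `C_β` of the subscroll `S(2̲)`. -/
def delta (D : ScrollData K N n a) : Set (PS K N) :=
  ⋃ (β : { i : Fin n // a i = 2 } → K) (_ : β ≠ 0),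
    linSet (Submodule.span K (Set.range fun j : Fin 3 =>
      ∑ i : { i : Fin n // a i = 2 }, β i •
        D.v i.1 ⟨(j : ℕ), by have h1 := i.2; have h2 := j.isLt; omega⟩))

end ScrollData

/-- The data of a (possibly singular) rational normal scroll in `ℙ^N` with vertex of
projective dimension `hv - 1` (empty vertex when `hv = 0`, i.e. a smooth scroll):
a cone over the smooth rational normal scroll `base`, with vertex spanned by the
vectors `zv`, the whole configuration being linearly independent and spanning `ℙ^N`. -/
structure ConeScroll (K : Type*) [Field K] (N n : ℕ) (a : Fin n → ℕ) (hv : ℕ) where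
  zv : Fin hv → (Fin (N + 1) → K)
  base : ScrollData K N n a
  indep : LinearIndependent K
    (Sum.elim zv fun q : (i : Fin n) × Fin (a i + 1) => base.v q.1 q.2)
  total : N + 1 = hv + ∑ i, (a i + 1)

namespace ConeScroll

variable {n hv : ℕ} {a : Fin n → ℕ}

/-- The vertex `Vert(X̃)` of the cone. -/
def vertex (C : ConeScroll K N n a hv) : Set (PS K N) :=
  linSet (Submodule.span K (Set.range C.zv))

/-- The linear span `⟨X̃₀⟩` of the smooth base scroll. -/
def baseSpan (C : ConeScroll K N n a hv) : Set (PS K N) :=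
  projSpan C.base.carrier

/-- The scroll `X̃ = Join(Vert(X̃), X̃₀)` itself. -/
def carrier (C : ConeScroll K N n a hv) : Set (PS K N) :=
  join C.vertex C.base.carrier

/-- `Σ_p(X̃) = 2·Vert(X̃)`: the secant locus is (set-theoretically) the vertex,
with double structure. -/
def SLempty (C : ConeScroll K N n a hv) (p : PS K N) : Prop :=
  secLocus C.carrier p = C.vertex

/-- `Σ_p(X̃) = Join(Vert(X̃), {x, y})` for two distinct points `x, y` of `⟨X̃₀⟩`. -/
def SLpair (C : ConeScroll K N n a hv) (p : PS K N) : Prop :=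
  ∃ x y : PS K N, x ∈ C.baseSpan ∧ y ∈ C.baseSpan ∧ x ≠ y ∧
    secLocus C.carrier p = join C.vertex {x, y}

/-- `Σ_p(X̃) = 2⟨Vert(X̃), x⟩` for a point `x` of a line `L ⊆ ⟨X̃₀⟩`. -/
def SLdouble (C : ConeScroll K N n a hv) (p : PS K N) : Prop :=
  ∃ L : Set (PS K N), IsLine L ∧ L ⊆ C.baseSpan ∧ ∃ x ∈ L,
    secLocus C.carrier p = projSpan (C.vertex ∪ {x})

/-- `Σ_p(X̃) = Join(Vert(X̃), L ∪ L')` for two distinct coplanar lines `L, L' ⊆ ⟨X̃₀⟩`. -/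
def SLlines (C : ConeScroll K N n a hv) (p : PS K N) : Prop :=
  ∃ L L' : Set (PS K N), IsLine L ∧ IsLine L' ∧ L ≠ L' ∧
    (∃ Pl : Set (PS K N), IsPlane Pl ∧ L ⊆ Pl ∧ L' ⊆ Pl) ∧
    L ⊆ C.baseSpan ∧ L' ⊆ C.baseSpan ∧
    secLocus C.carrier p = join C.vertex (L ∪ L')

/-- `Σ_p(X̃) = Join(Vert(X̃), V)` for a smooth plane conic `V ⊆ ⟨X̃₀⟩`. -/
def SLconic (C : ConeScroll K N n a hv) (p : PS K N) : Prop :=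
  ∃ V : Set (PS K N), IsSmoothConic V ∧ V ⊆ C.baseSpan ∧
    secLocus C.carrier p = join C.vertex V

/-- `Σ_p(X̃) = Join(Vert(X̃), W)` for a smooth quadric surface `W ⊆ ⟨X̃₀⟩`. -/
def SLquadric (C : ConeScroll K N n a hv) (p : PS K N) : Prop :=
  ∃ W : Set (PS K N), IsSmoothQuadricSurface W ∧ W ⊆ C.baseSpan ∧
    secLocus C.carrier p = join C.vertex W

end ConeScroll

/-- The homogeneous vanishing ideal of a set of projective points. -/
def vanishingIdeal (S : Set (PS K N)) : Ideal (MvPolynomial (Fin (N + 1)) K) where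
  carrier := vanishing S
  add_mem' := by
    intro f g hf hg v hv
    simp [map_add, hf v hv, hg v hv]
  zero_mem' := by intro v hv; simp
  smul_mem' := by
    intro c f hf v hv
    simp [smul_eq_mul, hf v hv]

/-- `rs` is a regular sequence on `R/I` (expressed without passing to the quotient):
the sequence stays proper modulo `I` and each entry is a nonzerodivisor modulo
`I` together with the previous entries. -/
def IsRegModulo {R : Type*} [CommRing R] (I : Ideal R) (rs : List R) : Prop :=
  (I ⊔ Ideal.span { x | x ∈ rs } ≠ ⊤) ∧
  ∀ (i : ℕ) (h : i < rs.length) (y : R),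
    rs.get ⟨i, h⟩ * y ∈ I ⊔ Ideal.span { x | x ∈ rs.take i } →
    y ∈ I ⊔ Ideal.span { x | x ∈ rs.take i }

/-- `S ⊆ ℙ^N` is arithmetically Cohen–Macaulay: its homogeneous coordinate ring
admits a regular sequence, inside the irrelevant maximal ideal, of length equal to
its Krull dimension. -/
def IsACM (S : Set (PS K N)) : Prop :=
  ∃ rs : List (MvPolynomial (Fin (N + 1)) K),
    (∀ f ∈ rs, f ∈ Ideal.span
      (Set.range (MvPolynomial.X : Fin (N + 1) → MvPolynomial (Fin (N + 1)) K))) ∧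
    IsRegModulo (vanishingIdeal S) rs ∧
    ((rs.length : ℕ∞) : WithBot ℕ∞) =
      ringKrullDim (MvPolynomial (Fin (N + 1)) K ⧸ vanishingIdeal S)

/-- The image of a subset of `ℙ^N` under the linear projection induced by a linear
map `T` on homogeneous coordinates. -/
def projImage {M : ℕ} (T : (Fin (N + 1) → K) →ₗ[K] (Fin (M + 1) → K))
    (X : Set (PS K N)) : Set (PS K M) :=
  { y | ∃ x ∈ X, y.submodule = Submodule.map T x.submodule }

end SecantLoci

/-!
In the frame `D.v`, vectors of `K^{2n}` are `2 × n` matrices and `X̃ = S(1,…,1)` is the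
projectivised locus of the rank-one matrices `b ⊗ γ`; since `p ∉ X̃`, its matrix `P` has rank 2.
The tangent space of `X̃` at `b ⊗ γ`, cut out by the derivatives of the `2 × 2` minors, is
`{b ⊗ r + s ⊗ γ}`. Hence on every secant line through `p`, chord or tangent, the rows of all points
lie in a space of dimension at most 2, which must be the row space of `P`: the secant locus lies in
the quadric `{[b ⊗ (c ᵥ* P)]}`, the Segre image of `ℙ¹ × ℙ¹` spanned by the matrices `eᵢ ⊗ Pⱼ`.
Conversely, for `x = b ⊗ (c ᵥ* P)` the line `px` is tangent at `x` when `b ⬝ c = 0`, and otherwise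
meets `X̃` again in `(b ⬝ c) P - x = (c₁, -c₀) ⊗ ((b₁, -b₀) ᵥ* P)`.
-/

namespace SecantLoci

open Matrix

section Projective

variable {K : Type*} [Field K] {N : ℕ}

lemma mem_linSet_iff {W : Submodule K (Fin (N + 1) → K)} (x : PS K N) :
    x ∈ linSet W ↔ x.rep ∈ W := by
  change x.submodule ≤ W ↔ _
  rw [Projectivization.submodule_eq, Submodule.span_singleton_le_iff_mem]

lemma mk_mem_linSet_iff {W : Submodule K (Fin (N + 1) → K)} {v : Fin (N + 1) → K} (hv : v ≠ 0) :
    Projectivization.mk K v hv ∈ linSet W ↔ v ∈ W := by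
  change (Projectivization.mk K v hv).submodule ≤ W ↔ _
  rw [Projectivization.submodule_mk, Submodule.span_singleton_le_iff_mem]

lemma linearIndependent_rep_pair {x y : PS K N} (h : x ≠ y) :
    LinearIndependent K ![x.rep, y.rep] := by
  refine linearIndependent_fin2.2 ⟨by simpa using y.rep_nonzero, fun a ha => h ?_⟩
  rw [← x.mk_rep, ← y.mk_rep, Projectivization.mk_eq_mk_iff']
  exact ⟨a, by simpa using ha⟩

lemma finrank_span_rep_pair {x y : PS K N} (h : x ≠ y) :
    Module.finrank K (Submodule.span K {x.rep, y.rep}) = 2 := by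
  rw [← Matrix.range_cons_cons_empty _ _ ![], finrank_span_eq_card (linearIndependent_rep_pair h),
    Fintype.card_fin]

lemma isLine_linSet_span_rep_pair {x y : PS K N} (h : x ≠ y) :
    IsLine (linSet (Submodule.span K {x.rep, y.rep})) :=
  ⟨_, finrank_span_rep_pair h, rfl⟩

lemma left_mem_linSet_span_rep_pair (x y : PS K N) :
    x ∈ linSet (Submodule.span K {x.rep, y.rep}) :=
  (mem_linSet_iff x).2 (Submodule.subset_span (Set.mem_insert _ _))

lemma right_mem_linSet_span_rep_pair (x y : PS K N) :
    y ∈ linSet (Submodule.span K {x.rep, y.rep}) :=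
  (mem_linSet_iff y).2 (Submodule.subset_span (Set.mem_insert_of_mem _ rfl))

lemma IsLine.eq_linSet_span_rep_pair {L : Set (PS K N)} (hL : IsLine L) {x y : PS K N}
    (hx : x ∈ L) (hy : y ∈ L) (hxy : x ≠ y) :
    L = linSet (Submodule.span K {x.rep, y.rep}) := by
  obtain ⟨W, hW, rfl⟩ := hL
  rw [mem_linSet_iff] at hx hy
  have hle : Submodule.span K {x.rep, y.rep} ≤ W := by
    rw [Submodule.span_le, Set.insert_subset_iff, Set.singleton_subset_iff]
    exact ⟨hx, hy⟩
  rw [Submodule.eq_of_le_of_finrank_le hle (by rw [hW, finrank_span_rep_pair hxy])]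

end Projective

section LinearAlgebra

variable {K : Type*} [Field K]

lemma finrank_span_pair_le {V : Type*} [AddCommGroup V] [Module K V] (u v : V) :
    Module.finrank K (Submodule.span K {u, v}) ≤ 2 := by
  rw [← Matrix.range_cons_cons_empty u v ![]]
  exact (finrank_range_le_card _).trans (by simp)

lemma span_range_eq_of_finrank_le {ι V : Type*} [Fintype ι] [AddCommGroup V] [Module K V]
    {P : ι → V} (hP : LinearIndependent K P) {R : Submodule K V} [FiniteDimensional K R]
    (hR : Module.finrank K R ≤ Fintype.card ι) (hPR : ∀ i, P i ∈ R) :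
    Submodule.span K (Set.range P) = R :=
  Submodule.eq_of_le_of_finrank_le (Submodule.span_le.2 (Set.range_subset_iff.2 hPR))
    (by rwa [finrank_span_eq_card hP])

end LinearAlgebra

section Gradient

variable {K : Type*} [Field K] {σ : Type*}

def gradAt (f : MvPolynomial σ K) (q : σ → K) : σ → K := fun i => eval q (pderiv i f)

@[simp]
lemma gradAt_C (a : K) (q : σ → K) : gradAt (C a) q = 0 := by
  ext i
  simp [gradAt]

@[simp]
lemma gradAt_add (f g : MvPolynomial σ K) (q : σ → K) :
    gradAt (f + g) q = gradAt f q + gradAt g q := by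
  ext i
  simp [gradAt]

@[simp]
lemma gradAt_sub (f g : MvPolynomial σ K) (q : σ → K) :
    gradAt (f - g) q = gradAt f q - gradAt g q := by
  ext i
  simp [gradAt]

@[simp]
lemma gradAt_mul (f g : MvPolynomial σ K) (q : σ → K) :
    gradAt (f * g) q = eval q g • gradAt f q + eval q f • gradAt g q := by
  ext i
  simp only [gradAt, Derivation.leibniz, smul_eq_mul, map_add, map_mul, Pi.add_apply,
    Pi.smul_apply]
  ring

@[simp]
lemma gradAt_X [DecidableEq σ] (i : σ) (q : σ → K) : gradAt (X i) q = Pi.single i 1 := by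
  ext j
  simp [gradAt, pderiv_X, Pi.single_apply, eq_comm]

lemma gradAt_toMvPolynomial [Fintype σ] {m : Type*} (M : Matrix m σ K) (r : m) (q : σ → K) :
    gradAt (M.toMvPolynomial r) q = M r := by
  classical
  ext i
  simp only [gradAt, Matrix.toMvPolynomial, map_sum, pderiv_monomial]
  rw [Finset.sum_eq_single i (fun j _ hj => by simp [hj]) (by simp)]
  simp

def restrictLine (q z : σ → K) : MvPolynomial σ K →ₐ[K] Polynomial K :=
  aeval fun i => Polynomial.C (q i) + Polynomial.C (z i) * Polynomial.X

lemma eval_restrictLine (q z : σ → K) (f : MvPolynomial σ K) (t : K) :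
    (restrictLine q z f).eval t = eval (q + t • z) f := by
  have hcomp := DFunLike.congr_fun (comp_aeval
    (fun i => Polynomial.C (q i) + Polynomial.C (z i) * Polynomial.X) (Polynomial.aeval t)) f
  simp only [AlgHom.comp_apply, Polynomial.coe_aeval_eq_eval] at hcomp
  rw [restrictLine, hcomp, aeval_eq_eval]
  congr 2
  funext i
  simp only [Polynomial.eval_add, Polynomial.eval_mul, Polynomial.eval_C, Polynomial.eval_X,
    Pi.add_apply, Pi.smul_apply, smul_eq_mul, mul_comm]

lemma coeff_zero_restrictLine (q z : σ → K) (f : MvPolynomial σ K) :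
    (restrictLine q z f).coeff 0 = eval q f := by
  rw [Polynomial.coeff_zero_eq_eval_zero, eval_restrictLine, zero_smul, add_zero]

lemma coeff_one_restrictLine [Fintype σ] (q z : σ → K) (f : MvPolynomial σ K) :
    (restrictLine q z f).coeff 1 = z ⬝ᵥ gradAt f q := by
  classical
  induction f using MvPolynomial.induction_on with
  | C a => simp [restrictLine]
  | add f g hf hg => simp [hf, hg, dotProduct_add]
  | mul_X f i hf =>
    have h0 := coeff_zero_restrictLine q z f
    simp only [restrictLine] at hf h0 ⊢
    simp [mul_add, ← mul_assoc, Polynomial.coeff_mul_C, hf, h0, dotProduct_add, dotProduct_single]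
    ring

lemma dotProduct_gradAt_eq_zero [Fintype σ] [Infinite K] {q z : σ → K} {f : MvPolynomial σ K}
    (h : ∀ t : K, eval (q + t • z) f = 0) : z ⬝ᵥ gradAt f q = 0 := by
  have hline : restrictLine q z f = 0 :=
    Polynomial.funext fun t => by rw [eval_restrictLine, h, Polynomial.eval_zero]
  rw [← coeff_one_restrictLine, hline, Polynomial.coeff_zero]

end Gradient

section Tangent

variable {K : Type*} [Field K] {N : ℕ}

lemma linSet_subset_tangentSpace [Infinite K] {S : Set (PS K N)} {q : PS K N}
    {W : Submodule K (Fin (N + 1) → K)}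
    (hW : W ≤ Submodule.span K {d | ∀ t : K, q.rep + t • d ∈ cone S}) :
    linSet W ⊆ tangentSpace S q := by
  intro x hx f hf
  have hker : W ≤ LinearMap.ker ((dotProductBilin K K).flip (gradAt f q.rep)) :=
    hW.trans <| Submodule.span_le.2 fun d hd =>
      dotProduct_gradAt_eq_zero fun t => hf _ (hd t)
  exact hker ((mem_linSet_iff x).1 hx)

end Tangent

section RankOne

variable {K : Type*} [Field K]

lemma ne_zero_and_ne_zero_of_vecMulVec_ne_zero {m n : Type*} {a : m → K} {c : n → K}
    (h : vecMulVec a c ≠ 0) : a ≠ 0 ∧ c ≠ 0 :=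
  ⟨by rintro rfl; exact h (zero_vecMulVec c),
    by rintro rfl; exact h (by ext; simp [vecMulVec_apply])⟩

lemma exists_eq_vecMulVec_of_not_linearIndependent {n : Type*} {M : Matrix (Fin 2) n K}
    (h : ¬LinearIndependent K M.row) : ∃ a c, M = vecMulVec a c := by
  simp only [linearIndependent_fin2, row_apply', not_and, not_forall, not_not] at h
  by_cases h1 : M 1 = 0
  · refine ⟨![1, 0], M 0, ?_⟩
    ext i k
    fin_cases i <;> simp [vecMulVec_apply, h1]
  · obtain ⟨a, ha⟩ := h h1
    refine ⟨![a, 1], M 1, ?_⟩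
    ext i k
    fin_cases i <;> simp [vecMulVec_apply, ← ha]

lemma dotProduct_smul_one_sub_vecMulVec (b c : Fin 2 → K) :
    (b ⬝ᵥ c) • (1 : Matrix (Fin 2) (Fin 2) K) - vecMulVec b c =
      vecMulVec ![c 1, -c 0] ![b 1, -b 0] := by
  ext i j
  fin_cases i <;> fin_cases j <;> simp [dotProduct, vecMulVec_apply] <;> ring

lemma exists_dotProduct_eq_one {m : Type*} [Fintype m] [DecidableEq m] {a : m → K} (ha : a ≠ 0) :
    ∃ u, u ⬝ᵥ a = 1 := by
  obtain ⟨i, hi⟩ := Function.ne_iff.mp ha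
  exact ⟨Pi.single i (a i)⁻¹, by simp [single_dotProduct, inv_mul_cancel₀ hi]⟩

lemma exists_one_eq_vecMulVec_add_vecMulVec {a : Fin 2 → K} (ha : a ≠ 0) :
    ∃ u, (1 : Matrix (Fin 2) (Fin 2) K) = vecMulVec a u + vecMulVec ![u 1, -u 0] ![a 1, -a 0] := by
  obtain ⟨u, hu⟩ := exists_dotProduct_eq_one ha
  refine ⟨u, ?_⟩
  rw [← dotProduct_smul_one_sub_vecMulVec, dotProduct_comm, hu, one_smul, add_sub_cancel]

lemma exists_smul_eq_of_mul_eq_mul {n : Type*} {ω c : n → K} (hc : c ≠ 0)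
    (h : ∀ k k', ω k * c k' = ω k' * c k) : ∃ t : K, ω = t • c := by
  obtain ⟨k₀, hk₀⟩ := Function.ne_iff.mp hc
  refine ⟨ω k₀ / c k₀, funext fun k => ?_⟩
  simp only [Pi.smul_apply, smul_eq_mul, Pi.zero_apply] at hk₀ ⊢
  field_simp
  exact h k k₀

lemma exists_vecMulVec_add_vecMulVec_eq_one {b c : Fin 2 → K} (hb : b ≠ 0) (hc : c ≠ 0)
    (h : b ⬝ᵥ c = 0) : ∃ r s, vecMulVec b r + vecMulVec s c = 1 := by
  obtain ⟨u, hu⟩ := exists_one_eq_vecMulVec_add_vecMulVec hb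
  obtain ⟨t, ht⟩ : ∃ t : K, ![b 1, -b 0] = t • c := by
    refine exists_smul_eq_of_mul_eq_mul hc fun k k' => ?_
    simp only [dotProduct, Fin.sum_univ_two] at h
    fin_cases k <;> fin_cases k' <;> simp
    · linear_combination h
    · linear_combination -h
  rw [ht, vecMulVec_smul, ← smul_vecMulVec] at hu
  exact ⟨u, _, hu.symm⟩

lemma exists_eq_vecMulVec_add_vecMulVec {n : Type*} [Fintype n] {Y : Matrix (Fin 2) n K}
    {a : Fin 2 → K} {c : n → K} (ha : a ≠ 0) {t : K} (h : ![a 1, -a 0] ᵥ* Y = t • c) :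
    ∃ r s, Y = vecMulVec a r + vecMulVec s c := by
  obtain ⟨u, hu⟩ := exists_one_eq_vecMulVec_add_vecMulVec ha
  refine ⟨u ᵥ* Y, t • ![u 1, -u 0], ?_⟩
  calc Y = (1 : Matrix (Fin 2) (Fin 2) K) * Y := (Matrix.one_mul Y).symm
    _ = _ := by
      rw [hu, Matrix.add_mul, vecMulVec_mul, vecMulVec_mul, h, vecMulVec_smul, smul_vecMulVec]

lemma sum_sum_smul_vecMulVec_single {m l n : Type*} [Fintype m] [DecidableEq m] [Fintype l]
    (b : m → K) (c : l → K) (P : Matrix l n K) :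
    ∑ i, ∑ j, (b i * c j) • vecMulVec (Pi.single i 1) (P j) = vecMulVec b (c ᵥ* P) := by
  ext i k
  simp [Matrix.sum_apply, vecMulVec_apply, vecMul, dotProduct, Pi.single_apply, Finset.mul_sum,
    mul_assoc]

lemma linearIndependent_vecMulVec_single {m l n : Type*} [Fintype m] [DecidableEq m] [Fintype l]
    {P : Matrix l n K} (hP : LinearIndependent K P.row) :
    LinearIndependent K fun q : m × l => vecMulVec (Pi.single q.1 1) (P q.2) := by
  rw [Fintype.linearIndependent_iff] at hP ⊢
  intro g hg q
  refine hP (fun j => g (q.1, j)) (funext fun k => ?_) q.2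
  simpa [Matrix.sum_apply, Fintype.sum_prod_type, vecMulVec_apply, Pi.single_apply,
    Finset.sum_apply] using congr_fun (congr_fun hg q.1) k

end RankOne

namespace ScrollData

variable {K : Type*} [Field K] {n : ℕ} [NeZero n] (D : ScrollData K (2 * n - 1) n fun _ => 1)

def basis : Module.Basis (Fin 2 × Fin n) K (Fin (2 * n - 1 + 1) → K) :=
  haveI : Nonempty ((_ : Fin n) × Fin 2) := ⟨⟨0, 0⟩⟩
  (basisOfLinearIndependentOfCardEqFinrank D.indep
    (by simp; have := NeZero.pos n; omega)).reindex
    ((Equiv.sigmaEquivProd (Fin n) (Fin 2)).trans (Equiv.prodComm _ _))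

lemma basis_apply (j : Fin 2) (k : Fin n) : D.basis (j, k) = D.v k j := by
  simp [basis, Module.Basis.reindex_apply, coe_basisOfLinearIndependentOfCardEqFinrank]

/-- Coordinates in the frame `D.v`: entry `(j, k)` is the coefficient of `D.v k j`, so a point
of the ruling over `(s : t)` has coefficient matrix `![s, t] ⊗ c`. -/
def coeffs : (Fin (2 * n - 1 + 1) → K) ≃ₗ[K] Matrix (Fin 2) (Fin n) K :=
  D.basis.equivFun ≪≫ₗ LinearEquiv.curry K K (Fin 2) (Fin n) ≪≫ₗ Matrix.ofLinearEquiv K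

lemma coeffs_symm_apply (M : Matrix (Fin 2) (Fin n) K) :
    D.coeffs.symm M = ∑ j, ∑ k, M j k • D.v k j := by
  simp [coeffs, Module.Basis.equivFun_symm_apply, Fintype.sum_prod_type, basis_apply]

lemma coeffs_sum_smul_w (a : Fin 2 → K) (c : Fin n → K) :
    D.coeffs (∑ k, c k • D.w k (a 0) (a 1)) = vecMulVec a c := by
  rw [← LinearEquiv.eq_symm_apply, coeffs_symm_apply, Finset.sum_comm]
  simp [ScrollData.w, Fin.sum_univ_two, vecMulVec_apply, smul_add, smul_smul, mul_comm]

lemma mk_mem_carrier_iff {v : Fin (2 * n - 1 + 1) → K} (hv : v ≠ 0) :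
    Projectivization.mk K v hv ∈ D.carrier ↔ ∃ a c, D.coeffs v = vecMulVec a c := by
  simp only [ScrollData.carrier, Set.mem_iUnion, ScrollData.ruling, mk_mem_linSet_iff,
    Submodule.mem_span_range_iff_exists_fun]
  constructor
  · rintro ⟨s, t, -, c, rfl⟩
    exact ⟨![s, t], c, by simpa using D.coeffs_sum_smul_w ![s, t] c⟩
  · rintro ⟨a, c, hac⟩
    refine ⟨a 0, a 1, fun h => hv ?_, c, D.coeffs.injective (by rw [coeffs_sum_smul_w, hac])⟩
    have ha : a = 0 := by
      ext j
      fin_cases j <;> simp_all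
    rw [← D.coeffs.map_eq_zero_iff, hac, ha, zero_vecMulVec]

lemma mem_carrier_iff (x : PS K (2 * n - 1)) :
    x ∈ D.carrier ↔ ∃ a c, D.coeffs x.rep = vecMulVec a c := by
  conv_lhs => rw [← x.mk_rep]
  exact D.mk_mem_carrier_iff x.rep_nonzero

lemma mem_cone_carrier_iff (v : Fin (2 * n - 1 + 1) → K) :
    v ∈ cone D.carrier ↔ ∃ a c, D.coeffs v = vecMulVec a c := by
  refine ⟨fun hv => ?_, fun hv hv0 => (D.mk_mem_carrier_iff hv0).2 hv⟩
  by_cases hv0 : v = 0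
  · exact ⟨0, 0, by simp [hv0]⟩
  · exact (D.mk_mem_carrier_iff hv0).1 (hv hv0)

lemma ne_zero_of_coeffs_rep_eq {x : PS K (2 * n - 1)} {a : Fin 2 → K} {c : Fin n → K}
    (h : D.coeffs x.rep = vecMulVec a c) : a ≠ 0 ∧ c ≠ 0 :=
  ne_zero_and_ne_zero_of_vecMulVec_ne_zero (h ▸ D.coeffs.map_ne_zero_iff.2 x.rep_nonzero)

lemma linearIndependent_coeffs_rep_row {p : PS K (2 * n - 1)} (hp : p ∉ D.carrier) :
    LinearIndependent K (D.coeffs p.rep).row := by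
  by_contra h
  exact hp ((D.mem_carrier_iff p).2 (exists_eq_vecMulVec_of_not_linearIndependent h))

def coeffPoly (j : Fin 2) (k : Fin n) : MvPolynomial (Fin (2 * n - 1 + 1)) K :=
  (LinearMap.toMatrix' D.basis.equivFun.toLinearMap).toMvPolynomial (j, k)

lemma eval_coeffPoly (z : Fin (2 * n - 1 + 1) → K) (j : Fin 2) (k : Fin n) :
    eval z (D.coeffPoly j k) = D.coeffs z j k := by
  rw [coeffPoly, toMvPolynomial_eval_eq_apply, LinearMap.toMatrix'_mulVec]
  rfl

lemma dotProduct_gradAt_coeffPoly (z q : Fin (2 * n - 1 + 1) → K) (j : Fin 2) (k : Fin n) :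
    z ⬝ᵥ gradAt (D.coeffPoly j k) q = D.coeffs z j k := by
  rw [← D.eval_coeffPoly, coeffPoly, gradAt_toMvPolynomial, toMvPolynomial_eval_eq_apply,
    dotProduct_comm]
  rfl

def minorPoly (k k' : Fin n) : MvPolynomial (Fin (2 * n - 1 + 1)) K :=
  D.coeffPoly 0 k * D.coeffPoly 1 k' - D.coeffPoly 0 k' * D.coeffPoly 1 k

lemma minorPoly_mem_vanishing (k k' : Fin n) : D.minorPoly k k' ∈ vanishing D.carrier := by
  intro v hv
  obtain ⟨a, c, hac⟩ := (D.mem_cone_carrier_iff v).1 hv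
  simp only [minorPoly, map_sub, map_mul, eval_coeffPoly, hac, vecMulVec_apply]
  ring

lemma dotProduct_gradAt_minorPoly (z q : Fin (2 * n - 1 + 1) → K) (k k' : Fin n) :
    z ⬝ᵥ gradAt (D.minorPoly k k') q =
      D.coeffs z 0 k * D.coeffs q 1 k' + D.coeffs q 0 k * D.coeffs z 1 k' -
        D.coeffs z 0 k' * D.coeffs q 1 k - D.coeffs q 0 k' * D.coeffs z 1 k := by
  simp only [minorPoly, gradAt_sub, gradAt_mul, dotProduct_sub, dotProduct_add, dotProduct_smul,
    smul_eq_mul, eval_coeffPoly, dotProduct_gradAt_coeffPoly]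
  ring

lemma exists_coeffs_eq_of_mem_tangentSpace {q z : PS K (2 * n - 1)} {a : Fin 2 → K}
    {c : Fin n → K} (hq : D.coeffs q.rep = vecMulVec a c) (hz : z ∈ tangentSpace D.carrier q) :
    ∃ r s, D.coeffs z.rep = vecMulVec a r + vecMulVec s c := by
  obtain ⟨ha, hc⟩ := D.ne_zero_of_coeffs_rep_eq hq
  have hminors : ∀ k k', (![a 1, -a 0] ᵥ* D.coeffs z.rep) k * c k' =
      (![a 1, -a 0] ᵥ* D.coeffs z.rep) k' * c k := by
    intro k k'
    have h := (D.dotProduct_gradAt_minorPoly z.rep q.rep k k').symm.trans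
      (hz _ (D.minorPoly_mem_vanishing k k'))
    simp only [hq, vecMulVec_apply] at h
    simp [vecMul, dotProduct, Fin.sum_univ_two]
    linear_combination h
  obtain ⟨t, ht⟩ := exists_smul_eq_of_mul_eq_mul hc hminors
  exact exists_eq_vecMulVec_add_vecMulVec ha ht

lemma linSet_subset_tangentSpace_carrier [Infinite K] {q : PS K (2 * n - 1)} {a : Fin 2 → K}
    {c : Fin n → K} (hq : D.coeffs q.rep = vecMulVec a c)
    {W : Submodule K (Fin (2 * n - 1 + 1) → K)}
    (hW : ∀ w ∈ W, ∃ r s, D.coeffs w = vecMulVec a r + vecMulVec s c) :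
    linSet W ⊆ tangentSpace D.carrier q := by
  refine linSet_subset_tangentSpace fun w hw => ?_
  obtain ⟨r, s, hrs⟩ := hW w hw
  rw [← D.coeffs.symm_apply_apply w, hrs, map_add]
  refine Submodule.add_mem _ (Submodule.subset_span fun t => ?_) (Submodule.subset_span fun t => ?_)
  · refine (D.mem_cone_carrier_iff _).2 ⟨a, c + t • r, ?_⟩
    rw [map_add, map_smul, LinearEquiv.apply_symm_apply, hq, vecMulVec_add, vecMulVec_smul]
  · refine (D.mem_cone_carrier_iff _).2 ⟨a + t • s, c, ?_⟩
    rw [map_add, map_smul, LinearEquiv.apply_symm_apply, hq, add_vecMulVec, smul_vecMulVec]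

lemma coeffs_mem_of_mem_span_pair {R : Submodule K (Fin n → K)} {u v w : Fin (2 * n - 1 + 1) → K}
    (hu : ∀ j, D.coeffs u j ∈ R) (hv : ∀ j, D.coeffs v j ∈ R)
    (hw : w ∈ Submodule.span K {u, v}) (j : Fin 2) : D.coeffs w j ∈ R := by
  obtain ⟨s, t, rfl⟩ := Submodule.mem_span_pair.1 hw
  rw [show D.coeffs (s • u + t • v) j = s • D.coeffs u j + t • D.coeffs v j by ext; simp]
  exact R.add_mem (R.smul_mem s (hu j)) (R.smul_mem t (hv j))

variable {p : PS K (2 * n - 1)}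

lemma exists_coeffs_mem_of_isSecantLine (hp : p ∉ D.carrier) {L : Set (PS K (2 * n - 1))}
    (hL : IsSecantLine D.carrier L) (hpL : p ∈ L) :
    ∃ R : Submodule K (Fin n → K), Module.finrank K R ≤ 2 ∧ ∀ x ∈ L, ∀ j, D.coeffs x.rep j ∈ R := by
  obtain ⟨hline, ⟨y, ⟨hyX, hyL⟩, z, ⟨hzX, hzL⟩, hyz⟩ | ⟨q, ⟨hqX, hqL⟩, hqT⟩⟩ := hL
  · obtain ⟨ay, cy, hy⟩ := (D.mem_carrier_iff y).1 hyX
    obtain ⟨az, cz, hz⟩ := (D.mem_carrier_iff z).1 hzX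
    refine ⟨_, finrank_span_pair_le cy cz, fun x hx => ?_⟩
    rw [hline.eq_linSet_span_rep_pair hyL hzL hyz, mem_linSet_iff] at hx
    refine D.coeffs_mem_of_mem_span_pair (fun j => ?_) (fun j => ?_) hx
    · exact Submodule.mem_span_pair.2 ⟨ay j, 0, by ext; simp [hy, vecMulVec_apply]⟩
    · exact Submodule.mem_span_pair.2 ⟨0, az j, by ext; simp [hz, vecMulVec_apply]⟩
  · obtain ⟨a, c, hq⟩ := (D.mem_carrier_iff q).1 hqX
    obtain ⟨r, s, hrs⟩ := D.exists_coeffs_eq_of_mem_tangentSpace hq (hqT hpL)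
    have hpq : p ≠ q := fun h => hp (h ▸ hqX)
    refine ⟨_, finrank_span_pair_le r c, fun x hx => ?_⟩
    rw [hline.eq_linSet_span_rep_pair hpL hqL hpq, mem_linSet_iff] at hx
    refine D.coeffs_mem_of_mem_span_pair (fun j => ?_) (fun j => ?_) hx
    · exact Submodule.mem_span_pair.2 ⟨a j, s j, by ext; simp [hrs, vecMulVec_apply]⟩
    · exact Submodule.mem_span_pair.2 ⟨0, a j, by ext; simp [hq, vecMulVec_apply]⟩

lemma exists_coeffs_eq_of_mem_secLocus (hp : p ∉ D.carrier) {x : PS K (2 * n - 1)}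
    (hx : x ∈ secLocus D.carrier p) :
    ∃ b c, D.coeffs x.rep = vecMulVec b (c ᵥ* D.coeffs p.rep) := by
  obtain ⟨hxX, hxp | hxL⟩ := hx
  · exact absurd (Set.mem_singleton_iff.1 hxp ▸ hxX) hp
  obtain ⟨L, ⟨hL, hpL⟩, hxL⟩ := Set.mem_iUnion₂.1 hxL
  obtain ⟨R, hR, hrows⟩ := D.exists_coeffs_mem_of_isSecantLine hp hL hpL
  have hspan := span_range_eq_of_finrank_le (D.linearIndependent_coeffs_rep_row hp)
    (by simpa using hR) (hrows p hpL)
  obtain ⟨b, γ, hbγ⟩ := (D.mem_carrier_iff x).1 hxX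
  obtain ⟨j, hj⟩ := Function.ne_iff.1 (D.ne_zero_of_coeffs_rep_eq hbγ).1
  have hγ : γ ∈ Submodule.span K (Set.range (D.coeffs p.rep).row) := by
    have hrow := hrows x hxL j
    rw [hbγ] at hrow
    rw [hspan, show γ = (b j)⁻¹ • (vecMulVec b γ).row j by
      rw [row_vecMulVec, smul_smul, inv_mul_cancel₀ hj, one_smul]]
    exact R.smul_mem _ hrow
  obtain ⟨c, hc⟩ := (Submodule.mem_span_range_iff_exists_fun K).1 hγ
  exact ⟨b, c, by rw [hbγ, vecMul_eq_sum, ← hc]; rfl⟩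

lemma isSecantLine_of_dotProduct_eq_zero [Infinite K] (hp : p ∉ D.carrier)
    {x : PS K (2 * n - 1)} {b c : Fin 2 → K}
    (hx : D.coeffs x.rep = vecMulVec b (c ᵥ* D.coeffs p.rep)) (hbc : b ⬝ᵥ c = 0) :
    IsSecantLine D.carrier (linSet (Submodule.span K {p.rep, x.rep})) := by
  have hxX : x ∈ D.carrier := (D.mem_carrier_iff x).2 ⟨_, _, hx⟩
  obtain ⟨hb, hcP⟩ := D.ne_zero_of_coeffs_rep_eq hx
  have hc : c ≠ 0 := by rintro rfl; exact hcP (zero_vecMul _)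
  obtain ⟨r, s, hrs⟩ := exists_vecMulVec_add_vecMulVec_eq_one hb hc hbc
  have hp' : D.coeffs p.rep =
      vecMulVec b (r ᵥ* D.coeffs p.rep) + vecMulVec s (c ᵥ* D.coeffs p.rep) := by
    rw [← vecMulVec_mul, ← vecMulVec_mul, ← Matrix.add_mul, hrs, Matrix.one_mul]
  refine ⟨isLine_linSet_span_rep_pair fun h => hp (h ▸ hxX),
    Or.inr ⟨x, ⟨hxX, right_mem_linSet_span_rep_pair p x⟩,
      D.linSet_subset_tangentSpace_carrier hx fun w hw => ?_⟩⟩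
  obtain ⟨e₁, e₂, rfl⟩ := Submodule.mem_span_pair.1 hw
  refine ⟨e₁ • r ᵥ* D.coeffs p.rep + e₂ • c ᵥ* D.coeffs p.rep, e₁ • s, ?_⟩
  rw [map_add, map_smul, map_smul, hx]
  nth_rw 1 [hp']
  simp only [vecMulVec_add, vecMulVec_smul, smul_vecMulVec, smul_add]
  abel

lemma isSecantLine_of_dotProduct_ne_zero (hp : p ∉ D.carrier) {x : PS K (2 * n - 1)}
    {b c : Fin 2 → K} (hx : D.coeffs x.rep = vecMulVec b (c ᵥ* D.coeffs p.rep))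
    (hbc : b ⬝ᵥ c ≠ 0) :
    IsSecantLine D.carrier (linSet (Submodule.span K {p.rep, x.rep})) := by
  have hxX : x ∈ D.carrier := (D.mem_carrier_iff x).2 ⟨_, _, hx⟩
  set y := (b ⬝ᵥ c) • p.rep - x.rep
  have hy : D.coeffs y = vecMulVec ![c 1, -c 0] (![b 1, -b 0] ᵥ* D.coeffs p.rep) := by
    rw [map_sub, map_smul, hx, ← vecMulVec_mul, ← vecMulVec_mul,
      ← dotProduct_smul_one_sub_vecMulVec, Matrix.sub_mul, Matrix.smul_mul, Matrix.one_mul]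
  have hyx : y ∉ K ∙ x.rep := by
    intro h
    obtain ⟨μ, hμ⟩ := Submodule.mem_span_singleton.1 h
    have hpx : p.rep = ((b ⬝ᵥ c)⁻¹ * (μ + 1)) • x.rep := by
      rw [mul_smul, add_smul, one_smul, hμ, sub_add_cancel, smul_smul, inv_mul_cancel₀ hbc,
        one_smul]
    refine hp ((D.mem_carrier_iff p).2 ⟨((b ⬝ᵥ c)⁻¹ * (μ + 1)) • b, c ᵥ* D.coeffs p.rep, ?_⟩)
    nth_rw 1 [hpx]
    rw [map_smul, hx, smul_vecMulVec]
  have hy0 : y ≠ 0 := fun h => hyx (h ▸ Submodule.zero_mem _)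
  refine ⟨isLine_linSet_span_rep_pair fun h => hp (h ▸ hxX),
    Or.inl ⟨x, ⟨hxX, right_mem_linSet_span_rep_pair p x⟩,
      Projectivization.mk K y hy0, ⟨(D.mk_mem_carrier_iff hy0).2 ⟨_, _, hy⟩,
        (mk_mem_linSet_iff hy0).2 ?_⟩, fun h => hyx ?_⟩⟩
  · exact Submodule.sub_mem _ (Submodule.smul_mem _ _ (Submodule.subset_span (by simp)))
      (Submodule.subset_span (by simp))
  · rw [← x.mk_rep, eq_comm, Projectivization.mk_eq_mk_iff'] at h
    exact Submodule.mem_span_singleton.2 h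

lemma mem_secLocus_of_coeffs_eq [Infinite K] (hp : p ∉ D.carrier) {x : PS K (2 * n - 1)}
    {b c : Fin 2 → K} (hx : D.coeffs x.rep = vecMulVec b (c ᵥ* D.coeffs p.rep)) :
    x ∈ secLocus D.carrier p := by
  refine ⟨(D.mem_carrier_iff x).2 ⟨_, _, hx⟩, Or.inr (Set.mem_biUnion ⟨?_,
    left_mem_linSet_span_rep_pair p x⟩ (right_mem_linSet_span_rep_pair p x))⟩
  by_cases hbc : b ⬝ᵥ c = 0
  · exact D.isSecantLine_of_dotProduct_eq_zero hp hx hbc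
  · exact D.isSecantLine_of_dotProduct_ne_zero hp hx hbc

end ScrollData

/-- Let `X̃ = S(1,…,1) ⊆ ℙ^{2n-1}` (`n` ones, `n ≥ 2`) and let `p ∈ ℙ^{2n-1} \ X̃`.
Then `Σ_p(X̃)` is a smooth quadric surface. -/
theorem secLocus_of_segre_scroll {K : Type*} [Field K] [IsAlgClosed K]
    (n : ℕ) (hn : 2 ≤ n)
    (D : ScrollData K (2 * n - 1) n fun _ => 1)
    (p : PS K (2 * n - 1)) (hp : p ∉ D.carrier) :
    IsSmoothQuadricSurface (secLocus D.carrier p) := by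
  have : NeZero n := ⟨by omega⟩
  set P := D.coeffs p.rep
  refine ⟨fun i j => D.coeffs.symm (vecMulVec (Pi.single i 1) (P j)),
    (linearIndependent_vecMulVec_single (D.linearIndependent_coeffs_rep_row hp)).map'
      _ D.coeffs.symm.ker, ?_⟩
  ext x
  simp only [← map_smul, ← map_sum, sum_sum_smul_vecMulVec_single]
  constructor
  · intro hx
    obtain ⟨b, c, hbc⟩ := D.exists_coeffs_eq_of_mem_secLocus hp hx
    obtain ⟨hb, hcP⟩ := D.ne_zero_of_coeffs_rep_eq hbc
    refine ⟨b, c, hb, fun hc => hcP (by rw [hc, zero_vecMul]), ?_⟩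
    rw [Projectivization.submodule_eq, ← hbc, LinearEquiv.symm_apply_apply]
  · rintro ⟨b, c, -, -, hx⟩
    obtain ⟨μ, hμ⟩ := Submodule.mem_span_singleton.1
      (hx ▸ x.submodule_eq ▸ Submodule.mem_span_singleton_self x.rep)
    exact D.mem_secLocus_of_coeffs_eq hp (b := μ • b) (c := c)
      (by rw [← hμ, map_smul, LinearEquiv.apply_symm_apply, smul_vecMulVec])

end SecantLoci
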